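/- For any finite graph G with m ≥ 1 edges, letting w_{u,v} = (a_{u,v} − d_u d_v/(2m))/(2m) and w'_{u,v} = w_{u,v} for u ≠ v and 0 for u = v, the total absolute mass W' = Σ_{u,v} |w'_{u,v}| is strictly less than 2. -/

import Mathlib

open Finset

/-!
With `M = 2m`, bound each off-diagonal term by the triangle inequality,
`|a_{uv} - d_u d_v / M| ≤ a_{uv} + d_u d_v / M`. Summed over all pairs, the right-hand side
divided by `M` has total exactly `2`, because `a` and `d ⊗ d / M` both have total mass `M`.
The diagonal terms, which are excluded on the left, contribute at least `∑ d_u² / M² > 0`.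
-/

namespace Finset

variable {ι M : Type*} [Fintype ι] [DecidableEq ι] [AddCommGroup M]

theorem sum_sum_ite_eq_zero_eq_sub (f : ι → ι → M) :
    ∑ u, ∑ v, (if u = v then 0 else f u v) = ∑ u, ∑ v, f u v - ∑ u, f u u := by
  rw [← sum_sub_distrib]
  refine sum_congr rfl fun u _ => ?_
  rw [← sum_erase_eq_sub (mem_univ u), sum_ite, sum_const_zero, zero_add, filter_ne]

end Finset

section CenteredWeights

variable {V : Type*} [Fintype V]

theorem sum_sum_centered_mass_eq_two (a : V → V → ℝ) (d : V → ℝ) {M : ℝ}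
    (ha_sum : ∑ u, ∑ v, a u v = M) (hd_sum : ∑ v, d v = M) (hM : M ≠ 0) :
    ∑ u, ∑ v, (a u v + d u * d v / M) / M = 2 := by
  have hdd : ∑ u, ∑ v, d u * d v / M = M := by
    simp_rw [← sum_div, ← sum_mul_sum, hd_sum, mul_self_div_self]
  simp_rw [← sum_div, sum_add_distrib, ha_sum, hdd]
  field_simp
  ring

theorem sum_diag_centered_mass_pos (a : V → V → ℝ) (d : V → ℝ) {M : ℝ}
    (ha : ∀ u v, 0 ≤ a u v) (hd : ∀ v, 0 ≤ d v) (hd_sum : ∑ v, d v = M) (hM : 0 < M) :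
    0 < ∑ u, (a u u + d u * d u / M) / M := by
  obtain ⟨u₀, -, hu₀⟩ : ∃ u ∈ univ, (0 : ℝ) < d u :=
    exists_lt_of_sum_lt (by simpa [hd_sum] using hM)
  refine sum_pos' (fun u _ => by have := ha u u; have := hd u; positivity) ⟨u₀, mem_univ _, ?_⟩
  have := ha u₀ u₀
  positivity

theorem sum_abs_offDiag_centered_weight_lt_two [DecidableEq V] (a : V → V → ℝ) (d : V → ℝ) {M : ℝ}
    (ha : ∀ u v, 0 ≤ a u v) (hd : ∀ v, 0 ≤ d v)
    (ha_sum : ∑ u, ∑ v, a u v = M) (hd_sum : ∑ v, d v = M) (hM : 0 < M) :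
    ∑ u, ∑ v, |if u = v then (0 : ℝ) else (a u v - d u * d v / M) / M| < 2 := by
  have hterm : ∀ u v, |(a u v - d u * d v / M) / M| ≤ (a u v + d u * d v / M) / M := by
    intro u v
    have hdd : 0 ≤ d u * d v / M := by have := hd u; have := hd v; positivity
    rw [abs_div, abs_of_pos hM]
    gcongr
    exact abs_sub_le_iff.2 ⟨by linarith [ha u v], by linarith [ha u v]⟩
  calc ∑ u, ∑ v, |if u = v then (0 : ℝ) else (a u v - d u * d v / M) / M|
      ≤ ∑ u, ∑ v, if u = v then (0 : ℝ) else (a u v + d u * d v / M) / M := by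
        gcongr with u _ v _
        split_ifs
        · simp
        · exact hterm u v
    _ = 2 - ∑ u, (a u u + d u * d u / M) / M := by
        rw [sum_sum_ite_eq_zero_eq_sub, sum_sum_centered_mass_eq_two a d ha_sum hd_sum hM.ne']
    _ < 2 := sub_lt_self _ (sum_diag_centered_mass_pos a d ha hd hd_sum hM)

end CenteredWeights

namespace SimpleGraph

variable {V : Type*} [Fintype V] (G : SimpleGraph V) [DecidableRel G.Adj]

theorem sum_ite_adj_eq_degree (u : V) :
    ∑ v, (if G.Adj u v then (1 : ℝ) else 0) = G.degree u := by
  rw [sum_boole, ← card_neighborFinset_eq_degree, neighborFinset_eq_filter]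

end SimpleGraph

/-- For any finite graph `G` with `m ≥ 1` edges, letting
`w_{u,v} = (a_{u,v} − d_u d_v/(2m))/(2m)` and `w'_{u,v} = w_{u,v}` for `u ≠ v`,
`w'_{u,u} = 0`, the total absolute mass `∑_{u,v} |w'_{u,v}|` is strictly less
than `2`. -/
theorem total_offdiag_weight_lt_two
    {V : Type*} [Fintype V] [DecidableEq V] (G : SimpleGraph V) [DecidableRel G.Adj]
    (hm0 : 0 < G.edgeFinset.card) :
    ∑ u, ∑ v,
        |if u = v then (0 : ℝ) else
          ((if G.Adj u v then (1 : ℝ) else 0)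
            - (G.degree u : ℝ) * (G.degree v : ℝ) / (2 * (G.edgeFinset.card : ℝ)))
          / (2 * (G.edgeFinset.card : ℝ))| < 2 := by
  have hdeg_sum : ∑ v, (G.degree v : ℝ) = 2 * (G.edgeFinset.card : ℝ) := by
    exact_mod_cast G.sum_degrees_eq_twice_card_edges
  refine sum_abs_offDiag_centered_weight_lt_two (fun u v => if G.Adj u v then 1 else 0)
    (fun v => G.degree v) (fun u v => by split_ifs <;> norm_num) (fun v => by positivity)
    ?_ hdeg_sum (by positivity)
  simp_rw [G.sum_ite_adj_eq_degree, hdeg_sum]
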